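/- For a Bailey pair relative to a, i.e., sequences (α_n), (β_n) with β_n = ∑_{k=0}^{n} α_k / ((q;q)_{n-k} (aq;q)_{n+k}) for all n ≥ 0, the inverse relation holds: α_n = [(1 − a q^{2n})/(1 − a)] ∑_{k=0}^{n} (−1)^{n−k} q^{(n−k)(n−k−1)/2} [(a;q)_{n+k} / (q;q)_{n−k}] β_k. -/

import Mathlib

noncomputable def qp (q x : ℂ) (n : ℕ) : ℂ := ∏ i ∈ Finset.range n, (1 - x * q ^ i)

lemma qp_zero (q x : ℂ) : qp q x 0 = 1 := by simp [qp]

lemma qp_succ (q x : ℂ) (n : ℕ) : qp q x (n + 1) = qp q x n * (1 - x * q ^ n) :=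
  Finset.prod_range_succ _ _

lemma qp_add (q x : ℂ) (m n : ℕ) : qp q x (m + n) = qp q x m * qp q (x * q ^ m) n := by
  rw [qp, qp, qp, Finset.prod_range_add]
  congr 1
  apply Finset.prod_congr rfl
  intro i _
  rw [pow_add]
  ring

lemma qp_shift (q x : ℂ) (n : ℕ) : qp q x (n + 1) = (1 - x) * qp q (x * q) n := by
  have := qp_add q x 1 n
  simpa [qp_succ, qp_zero, add_comm 1 n, pow_one] using this

lemma one_sub_pow_ne (q : ℂ) (h1 : ‖q‖ < 1) (i : ℕ) : (1 : ℂ) - q ^ (i + 1) ≠ 0 := by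
  intro h
  have h2 : q ^ (i + 1) = 1 := by linear_combination -h
  have : ‖q ^ (i + 1)‖ < 1 := by
    rw [norm_pow]
    exact pow_lt_one₀ (norm_nonneg q) h1 (Nat.succ_ne_zero i)
  rw [h2] at this
  simp at this

lemma qpq_ne (q : ℂ) (h1 : ‖q‖ < 1) (n : ℕ) : qp q q n ≠ 0 := by
  rw [qp]
  apply Finset.prod_ne_zero_iff.2
  intro i _
  have := one_sub_pow_ne q h1 i
  rw [pow_succ'] at this
  exact this

noncomputable def gb (q : ℂ) : ℕ → ℕ → ℂ
  | 0, 0 => 1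
  | 0, _ + 1 => 0
  | m + 1, 0 => gb q m 0
  | m + 1, i + 1 => gb q m (i + 1) + q ^ (m - i) * gb q m i

lemma gb_zero (q : ℂ) (m : ℕ) : gb q m 0 = 1 := by
  induction m with
  | zero => rfl
  | succ m ih => rw [gb, ih]

lemma gb_of_gt (q : ℂ) : ∀ m i, m < i → gb q m i = 0 := by
  intro m
  induction m with
  | zero => intro i hi; match i, hi with | i + 1, _ => rfl
  | succ m ih =>
    intro i hi
    match i, hi with
    | i + 1, hi =>
      rw [gb, ih (i+1) (by omega), ih i (by omega)]
      ring

lemma gb_diag (q : ℂ) (m : ℕ) : gb q m m = 1 := by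
  induction m with
  | zero => rfl
  | succ m ih => rw [gb, gb_of_gt q m (m+1) (by omega), ih]; simp

lemma gb_mul (q : ℂ) : ∀ m i, i ≤ m → gb q m i * (qp q q i * qp q q (m - i)) = qp q q m := by
  intro m
  induction m with
  | zero => intro i hi; interval_cases i; simp [gb_zero, qp_zero]
  | succ m ih =>
    intro i hi
    match i with
    | 0 => simp [gb_zero, qp_zero]
    | i + 1 =>
      rcases Nat.lt_or_ge i m with hlt | hge
      · have e1 : m + 1 - (i + 1) = (m - (i+1)) + 1 := by omega
        have e2 : m - i = m - (i+1) + 1 := by omega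
        rw [gb, e1, qp_succ q q (m - (i+1)), qp_succ q q i]
        have h1 := ih (i+1) (by omega)
        have h2 := ih i (by omega)
        rw [e2] at h2 ⊢
        have hq : q ^ (m - (i+1) + 1) * q ^ (i + 1) = q ^ (m + 1) := by
          rw [← pow_add]; congr 1; omega
        have hm : qp q q (m + 1) = qp q q m * (1 - q * q ^ m) := qp_succ q q m
        rw [hm]
        have expand : (gb q m (i + 1) + q ^ (m - (i+1) + 1) * gb q m i) *
            (qp q q i * (1 - q * q ^ i) * (qp q q (m - (i + 1)) * (1 - q * q ^ (m - (i + 1))))) =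
            gb q m (i+1) * (qp q q (i+1) * qp q q (m - (i+1))) * (1 - q * q ^ (m - (i+1)))
            + q ^ (m - (i+1) + 1) * (1 - q * q ^ i) *
              (gb q m i * (qp q q i * qp q q (m - (i+1) + 1))) := by
          rw [qp_succ q q i, qp_succ q q (m - (i+1))]
          ring
        rw [expand, h1, h2]
        have : q ^ (m - (i + 1) + 1) * (q * q ^ i) = q * q ^ m := by
          rw [← pow_succ', ← pow_succ']
          rw [← pow_add]; congr 1; omega
        linear_combination (-(qp q q m)) * this
      · have hi' : i = m := by omega
        subst hi'
        rw [gb, gb_of_gt q i (i+1) (by omega), gb_diag]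
        simp [qp_zero]

lemma gb_symm (q : ℂ) (h1 : ‖q‖ < 1) (m i : ℕ) (hi : i ≤ m) : gb q m (m - i) = gb q m i := by
  have h1' := gb_mul q m i hi
  have h2' := gb_mul q m (m - i) (by omega)
  have e : m - (m - i) = i := by omega
  rw [e] at h2'
  have hne : qp q q i * qp q q (m - i) ≠ 0 :=
    mul_ne_zero (qpq_ne q h1 i) (qpq_ne q h1 _)
  apply mul_right_cancel₀ hne
  calc gb q m (m - i) * (qp q q i * qp q q (m - i))
      = gb q m (m - i) * (qp q q (m - i) * qp q q i) := by ring
    _ = qp q q m := h2'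
    _ = gb q m i * (qp q q i * qp q q (m - i)) := h1'.symm

lemma tri (i : ℕ) : (i + 1) * (i + 1 - 1) / 2 = i * (i - 1) / 2 + i := by
  rw [← Nat.choose_two_right, ← Nat.choose_two_right, Nat.choose_succ_succ,
    Nat.choose_one_right, add_comm]

lemma qbinom (q : ℂ) : ∀ (m : ℕ) (z w : ℂ),
    (∑ i ∈ Finset.range (m + 1),
      (-1 : ℂ) ^ i * q ^ (i * (i - 1) / 2) * gb q m i * z ^ i * w ^ (m - i))
      = ∏ t ∈ Finset.range m, (w - z * q ^ t) := by
  intro m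
  induction m with
  | zero => intro z w; simp [gb]
  | succ m ih =>
    intro z w
    have key : ∀ i ∈ Finset.range (m + 1),
        (-1 : ℂ) ^ (i + 1) * q ^ ((i + 1) * (i + 1 - 1) / 2) * gb q (m + 1) (i + 1) *
            z ^ (i + 1) * w ^ (m + 1 - (i + 1))
        = ((-1 : ℂ) ^ (i + 1) * q ^ ((i + 1) * (i + 1 - 1) / 2) * gb q m (i + 1) *
            z ^ (i + 1) * w ^ (m - i))
          + (-(z * q ^ m)) *
            ((-1 : ℂ) ^ i * q ^ (i * (i - 1) / 2) * gb q m i * z ^ i * w ^ (m - i)) := by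
      intro i hmem
      have hi : i < m + 1 := Finset.mem_range.mp hmem
      have e : m + 1 - (i + 1) = m - i := by omega
      rw [e, show gb q (m + 1) (i + 1) = gb q m (i + 1) + q ^ (m - i) * gb q m i from rfl]
      have hpow : q ^ ((i + 1) * (i + 1 - 1) / 2) * q ^ (m - i)
          = q ^ (i * (i - 1) / 2) * q ^ m := by
        rw [← pow_add, ← pow_add]; congr 1; rw [tri]; omega
      linear_combination ((-1 : ℂ) ^ i * (-1) * z ^ i * z * w ^ (m - i) * gb q m i) * hpow
    rw [Finset.sum_range_succ', Finset.sum_congr rfl key, Finset.sum_add_distrib,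
      ← Finset.mul_sum, ih z w]
    have hA : (∑ i ∈ Finset.range (m + 1),
        (-1 : ℂ) ^ (i + 1) * q ^ ((i + 1) * (i + 1 - 1) / 2) * gb q m (i + 1) *
          z ^ (i + 1) * w ^ (m - i))
        + ((-1 : ℂ) ^ 0 * q ^ (0 * (0 - 1) / 2) * gb q (m + 1) 0 * z ^ 0 * w ^ (m + 1 - 0))
        = w * ∏ t ∈ Finset.range m, (w - z * q ^ t) := by
      rw [← ih z w, Finset.mul_sum, Finset.sum_range_succ, gb_of_gt q m (m + 1) (by omega),
        Finset.sum_range_succ']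
      simp only [gb_zero, pow_zero, mul_one, one_mul, mul_zero, zero_mul, add_zero,
        Nat.sub_zero]
      congr 1
      · apply Finset.sum_congr rfl
        intro i hi
        have hi' : i < m := Finset.mem_range.mp hi
        have e : m - i = (m - (i + 1)) + 1 := by omega
        rw [e, pow_succ]
        ring
      · rw [pow_succ]
        ring
    rw [Finset.prod_range_succ]
    linear_combination hA

lemma vanish (q : ℂ) (m d : ℕ) (hd : d < m) :
    ∑ i ∈ Finset.range (m + 1),
      (-1 : ℂ) ^ i * q ^ (i * (i - 1) / 2) * gb q m i * (q ^ d) ^ (m - i) = 0 := by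
  have h := qbinom q m 1 (q ^ d)
  have h2 : ∑ i ∈ Finset.range (m + 1),
      (-1 : ℂ) ^ i * q ^ (i * (i - 1) / 2) * gb q m i * (q ^ d) ^ (m - i)
      = ∑ i ∈ Finset.range (m + 1),
      (-1 : ℂ) ^ i * q ^ (i * (i - 1) / 2) * gb q m i * (1:ℂ) ^ i * (q ^ d) ^ (m - i) := by
    apply Finset.sum_congr rfl; intro i _; rw [one_pow, mul_one]
  rw [h2, h]
  exact Finset.prod_eq_zero (Finset.mem_range.mpr hd) (by ring)

lemma pvanish (q : ℂ) (m : ℕ) (P : Polynomial ℂ) (hP : P.natDegree < m) :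
    ∑ i ∈ Finset.range (m + 1),
      (-1 : ℂ) ^ i * q ^ (i * (i - 1) / 2) * gb q m i * P.eval (q ^ (m - i)) = 0 := by
  have key : ∀ i ∈ Finset.range (m + 1),
      (-1 : ℂ) ^ i * q ^ (i * (i - 1) / 2) * gb q m i * P.eval (q ^ (m - i))
      = ∑ d ∈ Finset.range m,
          P.coeff d * ((-1 : ℂ) ^ i * q ^ (i * (i - 1) / 2) * gb q m i * (q ^ d) ^ (m - i)) := by
    intro i _
    rw [Polynomial.eval_eq_sum_range' hP, Finset.mul_sum]
    apply Finset.sum_congr rfl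
    intro d _
    rw [← pow_mul, ← pow_mul, Nat.mul_comm (m - i) d]
    ring
  rw [Finset.sum_congr rfl key, Finset.sum_comm]
  apply Finset.sum_eq_zero
  intro d hd
  rw [← Finset.mul_sum, vanish q m d (Finset.mem_range.mp hd), mul_zero]

lemma rvanish (q b : ℂ) (h1 : ‖q‖ < 1) (m : ℕ) (hm : 1 ≤ m) :
    ∑ i ∈ Finset.range (m + 1),
      (-1 : ℂ) ^ (m - i) * q ^ ((m - i) * (m - i - 1) / 2) * gb q m i *
        qp q (b * q ^ i) (m - 1) = 0 := by
  set P : Polynomial ℂ := ∏ t ∈ Finset.range (m - 1), (1 - Polynomial.C (b * q ^ t) * Polynomial.X)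
    with hPdef
  have hPeval : ∀ x : ℂ, P.eval x = ∏ t ∈ Finset.range (m - 1), (1 - b * q ^ t * x) := by
    intro x
    rw [hPdef, Polynomial.eval_prod]
    apply Finset.prod_congr rfl
    intro t _
    simp only [Polynomial.eval_sub, Polynomial.eval_one, Polynomial.eval_mul,
      Polynomial.eval_C, Polynomial.eval_X]
  have hqpP : ∀ i : ℕ, qp q (b * q ^ i) (m - 1) = P.eval (q ^ i) := by
    intro i
    rw [hPeval, qp]
    apply Finset.prod_congr rfl
    intro t _
    ring
  have hP : P.natDegree < m := by
    have h2 : P.natDegree ≤ ∑ t ∈ Finset.range (m - 1),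
        ((1 : Polynomial ℂ) - Polynomial.C (b * q ^ t) * Polynomial.X).natDegree :=
      Polynomial.natDegree_prod_le _ _
    have h3 : ∀ t ∈ Finset.range (m - 1),
        ((1 : Polynomial ℂ) - Polynomial.C (b * q ^ t) * Polynomial.X).natDegree ≤ 1 := by
      intro t _
      have e : (1 : Polynomial ℂ) - Polynomial.C (b * q ^ t) * Polynomial.X
          = Polynomial.C (-(b * q ^ t)) * Polynomial.X + Polynomial.C 1 := by
        rw [map_neg, map_one]; ring
      rw [e]
      exact Polynomial.natDegree_linear_le
    have h4 := le_trans h2 (Finset.sum_le_sum h3)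
    simp only [Finset.sum_const, Finset.card_range, smul_eq_mul, mul_one] at h4
    omega
  have h0 := pvanish q m P hP
  rw [← Finset.sum_range_reflect] at h0
  rw [← h0]
  apply Finset.sum_congr rfl
  intro i hi
  have hi' : i < m + 1 := Finset.mem_range.mp hi
  have e1 : m + 1 - 1 - i = m - i := by omega
  have e2 : m - (m - i) = i := by omega
  rw [e1, e2, gb_symm q h1 m i (by omega), hqpP]

lemma qpaq_ne (q a : ℂ) (ha : ∀ j : ℕ, 1 - a * q ^ (j + 1) ≠ 0) (n : ℕ) :
    qp q (a * q) n ≠ 0 := by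
  rw [qp]
  apply Finset.prod_ne_zero_iff.2
  intro i _
  intro h
  apply ha i
  rw [pow_succ']
  linear_combination h

lemma ortho (q a : ℂ) (h1 : ‖q‖ < 1) (ha1 : 1 - a ≠ 0)
    (ha : ∀ j : ℕ, 1 - a * q ^ (j + 1) ≠ 0) (n s : ℕ) (hs : s ≤ n) :
    ∑ j ∈ Finset.Icc s n,
      (-1 : ℂ) ^ (n - j) * q ^ ((n - j) * (n - j - 1) / 2) *
        (qp q a (n + j) / qp q q (n - j)) * (1 / (qp q q (j - s) * qp q (a * q) (j + s)))
      = if s = n then (1 - a) / (1 - a * q ^ (2 * n)) else 0 := by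
  rw [← Finset.Ico_add_one_right_eq_Icc, Finset.sum_Ico_eq_sum_range]
  set m := n - s with hmdef
  have hm1 : n + 1 - s = m + 1 := by omega
  rw [hm1]
  by_cases hcase : s = n
  · have hm0 : m = 0 := by omega
    rw [if_pos hcase, hm0, Finset.sum_range_one]
    have e1 : n - (s + 0) = 0 := by omega
    have e2 : s + 0 - s = 0 := by omega
    have e3 : n + (s + 0) = 2 * n := by omega
    have e4 : s + 0 + s = 2 * n := by omega
    rw [e1, e2, e3, e4]
    simp only [pow_zero, one_mul, Nat.zero_mul, qp_zero, mul_one, div_one]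
    match n with
    | 0 =>
      simp only [Nat.mul_zero, qp_zero, pow_zero, mul_one]
      rw [div_self ha1]
      simp
    | t + 1 =>
      have e5 : 2 * (t + 1) = (2 * t + 1) + 1 := by omega
      rw [e5, qp_shift q a (2 * t + 1), qp_succ q (a * q) (2 * t + 1)]
      have n3 : qp q (a * q) (2 * t + 1) ≠ 0 := qpaq_ne q a ha _
      have n5 : 1 - a * q ^ (2 * t + 1 + 1) ≠ 0 := ha (2 * t + 1)
      have e6 : a * q * q ^ (2 * t + 1) = a * q ^ (2 * t + 1 + 1) := by
        rw [mul_assoc, ← pow_succ']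
      rw [e6]
      field_simp
      ring
  · have hm : 1 ≤ m := by omega
    rw [if_neg hcase]
    have key : ∀ i ∈ Finset.range (m + 1),
        (-1 : ℂ) ^ (n - (s + i)) * q ^ ((n - (s + i)) * (n - (s + i) - 1) / 2) *
          (qp q a (n + (s + i)) / qp q q (n - (s + i))) *
          (1 / (qp q q (s + i - s) * qp q (a * q) (s + i + s)))
        = ((1 - a) / qp q q m) *
          ((-1 : ℂ) ^ (m - i) * q ^ ((m - i) * (m - i - 1) / 2) * gb q m i *
            qp q (a * q ^ (2 * s + 1) * q ^ i) (m - 1)) := by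
      intro i hi
      have hi' : i < m + 1 := Finset.mem_range.mp hi
      have e1 : n - (s + i) = m - i := by omega
      have e2 : s + i - s = i := by omega
      have e3 : n + (s + i) = (2 * s + i + 1) + (m - 1) := by omega
      have e4 : s + i + s = 2 * s + i := by omega
      rw [e1, e2, e3, e4, qp_add, qp_shift]
      have e5 : a * q ^ (2 * s + i + 1) = a * q ^ (2 * s + 1) * q ^ i := by
        rw [mul_assoc, ← pow_add]
        congr 2
        omega
      rw [e5]
      have hg := gb_mul q m i (by omega)
      have n1 : qp q q (m - i) ≠ 0 := qpq_ne q h1 _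
      have n2 : qp q q i ≠ 0 := qpq_ne q h1 _
      have n3 : qp q (a * q) (2 * s + i) ≠ 0 := qpaq_ne q a ha _
      have n4 : qp q q m ≠ 0 := qpq_ne q h1 _
      field_simp
      linear_combination (-(q ^ ((m - i) * (m - i - 1) / 2) *
        qp q (a * q ^ (2 * s + 1) * q ^ i) (m - 1))) * hg
    rw [Finset.sum_congr rfl key, ← Finset.mul_sum,
      rvanish q (a * q ^ (2 * s + 1)) h1 m hm, mul_zero]

theorem stmt13 (q a : ℂ) (h0 : 0 < ‖q‖) (h1 : ‖q‖ < 1) (ha1 : 1 - a ≠ 0)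
    (ha : ∀ j : ℕ, 1 - a * q ^ (j + 1) ≠ 0) (α β : ℕ → ℂ)
    (hpair : ∀ n : ℕ, β n = ∑ k ∈ Finset.range (n + 1),
        α k / (qp q q (n - k) * qp q (a * q) (n + k))) (n : ℕ) :
    α n = (1 - a * q ^ (2 * n)) / (1 - a) *
        ∑ k ∈ Finset.range (n + 1),
          (-1 : ℂ) ^ (n - k) * q ^ ((n - k) * (n - k - 1) / 2) *
            (qp q a (n + k) / qp q q (n - k)) * β k := by
  have h2n : 1 - a * q ^ (2 * n) ≠ 0 := by
    match n with
    | 0 => simpa using ha1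
    | t + 1 =>
      have := ha (2 * t + 1)
      rw [show 2 * (t + 1) = 2 * t + 1 + 1 from by omega]
      exact this
  have inner : ∀ j ∈ Finset.range (n + 1),
      (∑ k ∈ Finset.Icc j n,
        (-1 : ℂ) ^ (n - k) * q ^ ((n - k) * (n - k - 1) / 2) *
          (qp q a (n + k) / qp q q (n - k)) *
          (α j / (qp q q (k - j) * qp q (a * q) (k + j))))
      = α j * (if j = n then (1 - a) / (1 - a * q ^ (2 * n)) else 0) := by
    intro j hj
    have hj' : j ≤ n := by
      have := Finset.mem_range.mp hj
      omega
    rw [← ortho q a h1 ha1 ha n j hj', Finset.mul_sum]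
    apply Finset.sum_congr rfl
    intro k _
    rw [div_eq_mul_inv, div_eq_mul_inv, one_div]
    ring
  symm
  calc (1 - a * q ^ (2 * n)) / (1 - a) *
        ∑ k ∈ Finset.range (n + 1),
          (-1 : ℂ) ^ (n - k) * q ^ ((n - k) * (n - k - 1) / 2) *
            (qp q a (n + k) / qp q q (n - k)) * β k
      = (1 - a * q ^ (2 * n)) / (1 - a) *
        ∑ k ∈ Finset.range (n + 1), ∑ j ∈ Finset.range (k + 1),
          (-1 : ℂ) ^ (n - k) * q ^ ((n - k) * (n - k - 1) / 2) *
            (qp q a (n + k) / qp q q (n - k)) *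
            (α j / (qp q q (k - j) * qp q (a * q) (k + j))) := by
        congr 1
        apply Finset.sum_congr rfl
        intro k _
        rw [hpair k, Finset.mul_sum]
    _ = (1 - a * q ^ (2 * n)) / (1 - a) *
        ∑ j ∈ Finset.range (n + 1), ∑ k ∈ Finset.Icc j n,
          (-1 : ℂ) ^ (n - k) * q ^ ((n - k) * (n - k - 1) / 2) *
            (qp q a (n + k) / qp q q (n - k)) *
            (α j / (qp q q (k - j) * qp q (a * q) (k + j))) := by
        congr 1
        simp only [Finset.range_eq_Ico]
        rw [← Finset.sum_Ico_Ico_comm]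
        apply Finset.sum_congr rfl
        intro j _
        rw [Finset.Ico_add_one_right_eq_Icc]
    _ = (1 - a * q ^ (2 * n)) / (1 - a) *
        ∑ j ∈ Finset.range (n + 1),
          α j * (if j = n then (1 - a) / (1 - a * q ^ (2 * n)) else 0) := by
        congr 1
        exact Finset.sum_congr rfl inner
    _ = (1 - a * q ^ (2 * n)) / (1 - a) *
        (α n * ((1 - a) / (1 - a * q ^ (2 * n)))) := by
        congr 1
        rw [Finset.sum_eq_single_of_mem n (Finset.self_mem_range_succ n)
          (fun b _ hb => by rw [if_neg hb, mul_zero]), if_pos rfl]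
    _ = α n := by
        field_simp
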